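/- Let k be a field of characteristic 0. For a power series c(s) ∈ 1 + s²k[[s]], define b_c(x₀,x₁) = c(x₀)c(x₁)/c(x₀+x₁) ∈ k[[x₀,x₁]]^×. Then the set B(k) = { b_c : c ∈ 1 + s²k[[s]] } is a subgroup of the group of units of k[[x₀,x₁]] (under multiplication), and the map c ↦ b_c is injective: if b_c = b_{c'} with c, c' ∈ 1 + s²k[[s]], then c = c'. -/

import Mathlib

/- STATEMENT 10: for c ∈ 1 + s²k[[s]] let b_c(x₀,x₁) = c(x₀)c(x₁)/c(x₀+x₁) in
k[[x₀,x₁]].  The set B(k) = {b_c} is a subgroup of the units of k[[x₀,x₁]] and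
c ↦ b_c is injective. -/

noncomputable section

variable (k : Type) [Field k] [CharZero k]

/-- `c ∈ 1 + s²k[[s]]`. -/
def GoodGamma (c : PowerSeries k) : Prop :=
  PowerSeries.constantCoeff (R := k) c = 1 ∧ PowerSeries.coeff (R := k) 1 c = 0

/-- `c(x₀)` resp. `c(x₁)` in `k[[x₀,x₁]]`. -/
def substX (j : Fin 2) (c : PowerSeries k) : MvPowerSeries (Fin 2) k :=
  fun d => if d (1 - j) = 0 then PowerSeries.coeff (R := k) (d j) c else 0

/-- `c(x₀ + x₁)` in `k[[x₀,x₁]]`. -/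
def substAdd (c : PowerSeries k) : MvPowerSeries (Fin 2) k :=
  fun d => ((d 0 + d 1).choose (d 0) : k) * PowerSeries.coeff (R := k) (d 0 + d 1) c

/-- `b_c(x₀,x₁) = c(x₀)c(x₁)/c(x₀+x₁)`. -/
def bC (c : PowerSeries k) : MvPowerSeries (Fin 2) k :=
  substX k 0 c * substX k 1 c * (substAdd k c)⁻¹

/-- `B(k)`. -/
def BSet : Set (MvPowerSeries (Fin 2) k) :=
  {b | ∃ c : PowerSeries k, GoodGamma k c ∧ b = bC k c}

/-! `c ↦ c(x₀)`, `c ↦ c(x₁)` and `c ↦ c(x₀ + x₁)` are substitution homomorphisms (the last one by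
the binomial theorem), so `c ↦ b_c` is multiplicative, and `B(k)` is the image of the group
`1 + s²k[[s]]`. Injectivity reduces to the kernel: if `b_d = 1` then `d(x₀)d(x₁) = d(x₀ + x₁)`, and
comparing coefficients of `x₀ᵐx₁` gives `(m + 1) d_(m+1) = d_m d_1 = 0`. -/

open MvPowerSeries in
theorem coeff_X_add_X_pow {R : Type*} [CommSemiring R] (n : ℕ) (e : Fin 2 →₀ ℕ) :
    coeff e ((X 0 + X 1 : MvPowerSeries (Fin 2) R) ^ n) =
      if e 0 + e 1 = n then (n.choose (e 0) : R) else 0 := by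
  have he : ∀ m, e = Finsupp.single 0 m + Finsupp.single 1 (n - m) ↔ e 0 = m ∧ e 1 = n - m := by
    intro m
    constructor
    · rintro rfl; simp
    · rintro ⟨h0, h1⟩; ext i; fin_cases i <;> simp [h0, h1]
  simp only [add_pow, map_sum, X_pow_eq, monomial_mul_monomial, one_mul,
    ← map_natCast (C (σ := Fin 2) (R := R)), coeff_mul_C, coeff_monomial, he, ite_mul, zero_mul]
  split_ifs with h
  · rw [Finset.sum_eq_single (e 0)] <;> grind
  · exact Finset.sum_eq_zero (by grind)

theorem hasSubst_X_add_X {R : Type*} [CommRing R] :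
    PowerSeries.HasSubst (MvPowerSeries.X 0 + MvPowerSeries.X 1 : MvPowerSeries (Fin 2) R) :=
  (PowerSeries.HasSubst.X 0).add (PowerSeries.HasSubst.X 1)

section
variable {K : Type} [Field K]

theorem coeff_substX (j : Fin 2) (c : PowerSeries K) (e : Fin 2 →₀ ℕ) :
    MvPowerSeries.coeff e (substX K j c) =
      if e (1 - j) = 0 then PowerSeries.coeff (e j) c else 0 :=
  rfl

theorem coeff_substAdd (c : PowerSeries K) (e : Fin 2 →₀ ℕ) :
    MvPowerSeries.coeff e (substAdd K c) =
      ((e 0 + e 1).choose (e 0) : K) * PowerSeries.coeff (e 0 + e 1) c :=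
  rfl

theorem substX_eq_subst (j : Fin 2) (c : PowerSeries K) :
    substX K j c = PowerSeries.subst (MvPowerSeries.X j) c := by
  ext e
  have he : e = Finsupp.single j (e j) ↔ e (1 - j) = 0 := by
    constructor
    · intro h; rw [h]; fin_cases j <;> simp
    · intro h; ext i; fin_cases j <;> fin_cases i <;> simp_all
  simp only [PowerSeries.coeff_subst_single, coeff_substX, he]

theorem substAdd_eq_subst (c : PowerSeries K) :
    substAdd K c = PowerSeries.subst (MvPowerSeries.X 0 + MvPowerSeries.X 1) c := by
  ext e
  rw [PowerSeries.coeff_subst hasSubst_X_add_X, finsum_eq_single _ (e 0 + e 1)]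
  · rw [coeff_substAdd, coeff_X_add_X_pow, if_pos rfl, smul_eq_mul, mul_comm]
  · intro n hn
    simp [coeff_X_add_X_pow, Ne.symm hn]

theorem substX_one (j : Fin 2) : substX K j 1 = 1 := by
  rw [substX_eq_subst, ← PowerSeries.coe_substAlgHom (PowerSeries.HasSubst.X j), map_one]

theorem substX_mul (j : Fin 2) (c c' : PowerSeries K) :
    substX K j (c * c') = substX K j c * substX K j c' := by
  simp only [substX_eq_subst, PowerSeries.subst_mul (PowerSeries.HasSubst.X j)]

theorem substAdd_one : substAdd K 1 = 1 := by
  rw [substAdd_eq_subst, ← PowerSeries.coe_substAlgHom hasSubst_X_add_X, map_one]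

theorem substAdd_mul (c c' : PowerSeries K) :
    substAdd K (c * c') = substAdd K c * substAdd K c' := by
  simp only [substAdd_eq_subst, PowerSeries.subst_mul hasSubst_X_add_X]

theorem constantCoeff_substAdd (c : PowerSeries K) :
    MvPowerSeries.constantCoeff (substAdd K c) = PowerSeries.constantCoeff c := by
  simp [← MvPowerSeries.coeff_zero_eq_constantCoeff_apply, coeff_substAdd]

theorem coeff_substX_mul_substX (c c' : PowerSeries K) (e : Fin 2 →₀ ℕ) :
    MvPowerSeries.coeff e (substX K 0 c * substX K 1 c') =
      PowerSeries.coeff (e 0) c * PowerSeries.coeff (e 1) c' := by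
  rw [MvPowerSeries.coeff_mul,
    Finset.sum_eq_single (Finsupp.single 0 (e 0), Finsupp.single 1 (e 1))]
  · simp [coeff_substX]
  · rintro ⟨p, q⟩ hpq hne
    rw [Finset.HasAntidiagonal.mem_antidiagonal] at hpq
    simp only [coeff_substX, sub_zero, sub_self]
    split_ifs with hp hq <;> try simp only [mul_zero, zero_mul]
    refine absurd ?_ hne
    have h0 : p 0 + q 0 = e 0 := by rw [← hpq]; rfl
    have h1 : p 1 + q 1 = e 1 := by rw [← hpq]; rfl
    ext i <;> fin_cases i <;> simp <;> omega
  · refine fun h => absurd ?_ h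
    rw [Finset.HasAntidiagonal.mem_antidiagonal]
    ext i; fin_cases i <;> simp

theorem bC_one : bC K 1 = 1 := by
  simp [bC, substX_one, substAdd_one]

theorem bC_mul (c c' : PowerSeries K) : bC K (c * c') = bC K c * bC K c' := by
  simp only [bC, substX_mul, substAdd_mul, MvPowerSeries.mul_inv_rev]
  ring

theorem bC_mul_bC_inv {c : PowerSeries K} (hc : PowerSeries.constantCoeff c ≠ 0) :
    bC K c * bC K c⁻¹ = 1 := by
  rw [← bC_mul, PowerSeries.mul_inv_cancel c hc, bC_one]

theorem substX_mul_substX_eq_substAdd_of_bC_eq_one {c : PowerSeries K}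
    (hc : PowerSeries.constantCoeff c ≠ 0) (h : bC K c = 1) :
    substX K 0 c * substX K 1 c = substAdd K c := by
  rw [← one_mul (substAdd K c), ← h, bC, mul_assoc,
    MvPowerSeries.inv_mul_cancel _ (by rwa [constantCoeff_substAdd]), mul_one]

theorem goodGamma_one : GoodGamma K 1 := by
  simp [GoodGamma, PowerSeries.coeff_one]

theorem GoodGamma.constantCoeff_ne_zero {c : PowerSeries K} (hc : GoodGamma K c) :
    PowerSeries.constantCoeff c ≠ 0 := by
  simp [hc.1]

theorem GoodGamma.mul {c c' : PowerSeries K} (hc : GoodGamma K c) (hc' : GoodGamma K c') :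
    GoodGamma K (c * c') := by
  constructor
  · rw [map_mul, hc.1, hc'.1, one_mul]
  · rw [PowerSeries.coeff_one_mul, hc.2, hc'.2, zero_mul, zero_mul, add_zero]

theorem GoodGamma.inv {c : PowerSeries K} (hc : GoodGamma K c) : GoodGamma K c⁻¹ := by
  have h := congrArg (PowerSeries.coeff 1) (PowerSeries.mul_inv_cancel c hc.constantCoeff_ne_zero)
  rw [PowerSeries.coeff_one_mul, hc.2, zero_mul, zero_add, hc.1, mul_one, PowerSeries.coeff_one,
    if_neg one_ne_zero] at h
  exact ⟨by simp [PowerSeries.constantCoeff_inv, hc.1], h⟩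

theorem GoodGamma.eq_one_of_bC_eq_one [CharZero K] {c : PowerSeries K} (hc : GoodGamma K c)
    (h : bC K c = 1) : c = 1 := by
  have hfun := substX_mul_substX_eq_substAdd_of_bC_eq_one hc.constantCoeff_ne_zero h
  ext (_ | m)
  · simp [hc.1]
  · set e : Fin 2 →₀ ℕ := Finsupp.single 0 m + Finsupp.single 1 1
    have he0 : e 0 = m := by simp [e]
    have he1 : e 1 = 1 := by simp [e]
    have hm := congrArg (MvPowerSeries.coeff e) hfun
    rw [coeff_substX_mul_substX, coeff_substAdd, he0, he1, hc.2, mul_zero,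
      Nat.choose_succ_self_right] at hm
    rw [PowerSeries.coeff_one, if_neg m.succ_ne_zero]
    exact (mul_eq_zero.mp hm.symm).resolve_left (Nat.cast_ne_zero.mpr m.succ_ne_zero)

theorem injOn_bC [CharZero K] : Set.InjOn (bC K) {c | GoodGamma K c} := by
  intro c hc c' hc' h
  have hd : bC K (c * c'⁻¹) = 1 := by
    rw [bC_mul, h, bC_mul_bC_inv hc'.constantCoeff_ne_zero]
  have hd_one := (hc.mul hc'.inv).eq_one_of_bC_eq_one hd
  rw [eq_comm, PowerSeries.eq_mul_inv_iff_mul_eq hc'.constantCoeff_ne_zero, one_mul] at hd_one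
  exact hd_one.symm

end

theorem BSet_subgroup_and_injective :
    ((1 : MvPowerSeries (Fin 2) k) ∈ BSet k) ∧
    (∀ x ∈ BSet k, ∀ y ∈ BSet k, x * y ∈ BSet k) ∧
    (∀ x ∈ BSet k, IsUnit x ∧ ∃ y ∈ BSet k, x * y = 1) ∧
    (∀ c c' : PowerSeries k, GoodGamma k c → GoodGamma k c' → bC k c = bC k c' → c = c') := by
  refine ⟨⟨1, goodGamma_one, bC_one.symm⟩, ?_, ?_, fun c c' hc hc' => injOn_bC hc hc'⟩
  · rintro _ ⟨c, hc, rfl⟩ _ ⟨c', hc', rfl⟩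
    exact ⟨c * c', hc.mul hc', (bC_mul c c').symm⟩
  · rintro _ ⟨c, hc, rfl⟩
    have hinv := bC_mul_bC_inv hc.constantCoeff_ne_zero
    exact ⟨IsUnit.of_mul_eq_one _ hinv, _, ⟨c⁻¹, hc.inv, rfl⟩, hinv⟩

end
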